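/- Abstract convergence of the noisy damped fixed-point iteration (the convergence argument of Theorem thm_contract_discrete): Let H be a real Hilbert space, C > 0, μ < 0, and let Φ : H → H satisfy ‖Φ(u) − Φ(v)‖² ≤ C‖u − v‖² and ⟨Φ(u) − Φ(v), u − v⟩ ≤ μ‖u − v‖² for all u, v ∈ H, and let u* ∈ H satisfy Φ(u*) = u*. Let δ₁ ≥ 0, δ₂ ≥ 0, and let Φ_N : H → H satisfy ‖Φ_N(u) − Φ(u)‖ ≤ δ₁ for all u ∈ H. On a probability space (Ω, ℱ, ℙ) with a filtration (𝒢_k)_{k ≥ 0} such that 𝒢_0 is trivial, let (Φ̂_k)_{k ≥ 0} be H-valued square-integrable random variables with Φ̂_k measurable with respect to 𝒢_{k+1}, let ρ ∈ (0,1), and define u^0 ∈ H deterministic and u^{k+1} = (1 − ρ) Φ̂_k + ρ u^k. Assume that for every k, almost surely E[Φ̂_k | 𝒢_k] = Φ_N(u^k) and E[‖Φ̂_k − Φ_N(u^k)‖² | 𝒢_k] ≤ δ₂ (note u^k is 𝒢_k-measurable). Then there exist ρ ∈ (0,1), η ∈ (0,1) and a constant C′ > 0, all depending only on C and μ, such that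 for all k ≥ 0, E[‖u^k − u*‖²] ≤ η^k ‖u^0 − u*‖² + C′ (δ₁² + δ₂). -/

import Mathlib

/-!
Write `e = u - u*`. By monotonicity of `Φ` the cross term in
`‖(1 - ρ)(Φ u - u*) + ρ e‖²` is nonpositive, so the exact damped step contracts `‖e‖²` by the
factor `ρ` as soon as `(1 - ρ)(C + 1) ≤ 1`. The sampling and approximation errors enter the step
only through `(1 - ρ)(Φ̂ - Φ u)`; Young's inequality absorbs them at the price of raising the rate
from `ρ` to `(1 + ρ) / 2`, and after taking expectations their contribution per step is
`O(δ₁² + δ₂)`. Iterating the resulting linear recursion gives a geometric decay plus a bounded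
remainder.
-/

open MeasureTheory ProbabilityTheory RealInnerProductSpace

theorem norm_add_sq_le_of_pos {E : Type*} [SeminormedAddCommGroup E] {ε : ℝ} (hε : 0 < ε)
    (x y : E) : ‖x + y‖ ^ 2 ≤ (1 + ε) * ‖x‖ ^ 2 + (1 + ε⁻¹) * ‖y‖ ^ 2 := by
  have hyoung := two_mul_le_add_mul_sq (a := ‖x‖) (b := ‖y‖) hε
  calc ‖x + y‖ ^ 2 ≤ (‖x‖ + ‖y‖) ^ 2 := by gcongr; exact norm_add_le x y
    _ ≤ _ := by linarith

section Damping

variable {H : Type*} [NormedAddCommGroup H] [InnerProductSpace ℝ H]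

theorem norm_damped_sq_le_of_inner_nonpos {a b : H} {C ρ : ℝ} (hρ0 : 0 ≤ ρ) (hρ1 : ρ ≤ 1)
    (hρC : (1 - ρ) * (C + 1) ≤ 1) (ha : ‖a‖ ^ 2 ≤ C * ‖b‖ ^ 2) (hab : ⟪a, b⟫ ≤ 0) :
    ‖(1 - ρ) • a + ρ • b‖ ^ 2 ≤ ρ * ‖b‖ ^ 2 := by
  have hexpand : ‖(1 - ρ) • a + ρ • b‖ ^ 2
      = (1 - ρ) ^ 2 * ‖a‖ ^ 2 + 2 * ((1 - ρ) * ρ) * ⟪a, b⟫ + ρ ^ 2 * ‖b‖ ^ 2 := by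
    rw [norm_add_sq_real, norm_smul, norm_smul, real_inner_smul_left, real_inner_smul_right,
      Real.norm_of_nonneg (sub_nonneg.2 hρ1), Real.norm_of_nonneg hρ0]
    ring
  have hcross : (1 - ρ) * ρ * ⟪a, b⟫ ≤ 0 :=
    mul_nonpos_of_nonneg_of_nonpos (mul_nonneg (sub_nonneg.2 hρ1) hρ0) hab
  have hcoeff : (1 - ρ) ^ 2 * C + ρ ^ 2 ≤ ρ := by nlinarith
  rw [hexpand]
  nlinarith [mul_le_mul_of_nonneg_left ha (sq_nonneg (1 - ρ)),
    mul_le_mul_of_nonneg_right hcoeff (sq_nonneg ‖b‖)]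

theorem norm_damped_step_sub_sq_le {x y w u ustar : H} {C ρ δ : ℝ} (hρ0 : 0 < ρ) (hρ1 : ρ < 1)
    (hρC : (1 - ρ) * (C + 1) ≤ 1) (hlip : ‖x - ustar‖ ^ 2 ≤ C * ‖u - ustar‖ ^ 2)
    (hmono : ⟪x - ustar, u - ustar⟫ ≤ 0) (hy : ‖y - x‖ ≤ δ) :
    ‖(1 - ρ) • w + ρ • u - ustar‖ ^ 2
      ≤ (1 + ρ) / 2 * ‖u - ustar‖ ^ 2 + 2 * (1 - ρ ^ 2) * (δ ^ 2 + ‖w - y‖ ^ 2) := by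
  have hsplit : (1 - ρ) • w + ρ • u - ustar
      = ((1 - ρ) • (x - ustar) + ρ • (u - ustar)) + (1 - ρ) • (w - x) := by module
  have hdamped := norm_damped_sq_le_of_inner_nonpos hρ0.le hρ1.le hρC hlip hmono
  have hnoise : ‖(1 - ρ) • (w - x)‖ ^ 2 ≤ (1 - ρ) ^ 2 * (2 * (δ ^ 2 + ‖w - y‖ ^ 2)) := by
    rw [norm_smul, mul_pow, Real.norm_of_nonneg (sub_nonneg.2 hρ1.le)]
    gcongr
    calc ‖w - x‖ ^ 2 ≤ (‖w - y‖ + δ) ^ 2 := by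
          gcongr
          calc ‖w - x‖ = ‖(w - y) + (y - x)‖ := by rw [sub_add_sub_cancel]
            _ ≤ ‖w - y‖ + δ := (norm_add_le _ _).trans (by gcongr)
      _ ≤ 2 * (δ ^ 2 + ‖w - y‖ ^ 2) := by nlinarith [sq_nonneg (‖w - y‖ - δ)]
  -- Young's inequality with `ε = (1 - ρ) / (2ρ)` turns `ρ` into `(1 + ρ) / 2`.
  have hε : 0 < (1 - ρ) / (2 * ρ) := div_pos (by linarith) (by linarith)
  calc ‖(1 - ρ) • w + ρ • u - ustar‖ ^ 2
      ≤ (1 + (1 - ρ) / (2 * ρ)) * (ρ * ‖u - ustar‖ ^ 2)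
        + (1 + ((1 - ρ) / (2 * ρ))⁻¹) * ((1 - ρ) ^ 2 * (2 * (δ ^ 2 + ‖w - y‖ ^ 2))) := by
        rw [hsplit]
        refine (norm_add_sq_le_of_pos hε _ _).trans ?_
        gcongr
    _ = (1 + ρ) / 2 * ‖u - ustar‖ ^ 2 + 2 * (1 - ρ ^ 2) * (δ ^ 2 + ‖w - y‖ ^ 2) := by
        have : 1 - ρ ≠ 0 := by linarith
        field_simp
        ring

end Damping

theorem le_pow_mul_add_of_le_mul_add {e : ℕ → ℝ} {η b c : ℝ}
    (he : ∀ k, e (k + 1) ≤ η * e k + b) (hη : 0 ≤ η) (hc : 0 ≤ c) (hbc : η * c + b ≤ c) (k : ℕ) :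
    e k ≤ η ^ k * e 0 + c := by
  induction k with
  | zero => simpa using hc
  | succ k ih =>
    calc e (k + 1) ≤ η * (η ^ k * e 0 + c) + b := (he k).trans (by gcongr)
      _ ≤ η ^ (k + 1) * e 0 + c := by rw [pow_succ]; nlinarith

section Integral

variable {Ω : Type*} {m mΩ : MeasurableSpace Ω} {μ : Measure Ω} [IsProbabilityMeasure μ]

theorem integral_le_of_ae_condExp_le (hm : m ≤ mΩ) {f : Ω → ℝ} {c : ℝ}
    (hf : ∀ᵐ ω ∂μ, μ[f | m] ω ≤ c) : ∫ ω, f ω ∂μ ≤ c := by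
  rw [← integral_condExp hm]
  simpa using integral_mono_ae integrable_condExp (integrable_const c) hf

theorem integral_le_of_le_mul_add {f g h : Ω → ℝ} {η K c δ : ℝ} (hf : ∀ ω, 0 ≤ f ω)
    (hg : Integrable g μ) (hh : Integrable h μ) (hK : 0 ≤ K)
    (hfgh : ∀ ω, f ω ≤ η * g ω + K * (c + h ω)) (hδ : ∫ ω, h ω ∂μ ≤ δ) :
    ∫ ω, f ω ∂μ ≤ η * ∫ ω, g ω ∂μ + K * (c + δ) := by
  have hch : Integrable (fun ω => c + h ω) μ := (integrable_const c).add hh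
  have hbound : Integrable (fun ω => η * g ω + K * (c + h ω)) μ :=
    (hg.const_mul η).add (hch.const_mul K)
  calc ∫ ω, f ω ∂μ ≤ ∫ ω, η * g ω + K * (c + h ω) ∂μ :=
        integral_mono_of_nonneg (.of_forall hf) hbound (.of_forall hfgh)
    _ = η * ∫ ω, g ω ∂μ + K * (c + ∫ ω, h ω ∂μ) := by
        rw [integral_add (hg.const_mul η) (hch.const_mul K), integral_const_mul,
          integral_const_mul, integral_add (integrable_const c) hh]
        simp
    _ ≤ η * ∫ ω, g ω ∂μ + K * (c + δ) := by gcongr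

end Integral

/-- Abstract convergence of the noisy damped fixed-point iteration: if `Φ` is Lipschitz
(`‖Φ u - Φ v‖² ≤ C ‖u - v‖²`) and dissipative (`⟪Φ u - Φ v, u - v⟫ ≤ μ ‖u - v‖²` with `μ < 0`)
with fixed point `u*`, then there exist a damping `ρ ∈ (0,1)`, a rate `η ∈ (0,1)` and `C' > 0`,
depending only on `C` and `μ`, such that for every `δ₁`-accurate deterministic approximation
`Φ_N` of `Φ` and conditionally unbiased samples `Φ̂_k` of `Φ_N(u^k)` with conditional variance
at most `δ₂`, the damped iterates `u^{k+1} = (1-ρ) Φ̂_k + ρ u^k` satisfy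
`E[‖u^k - u*‖²] ≤ η^k ‖u^0 - u*‖² + C' (δ₁² + δ₂)`. -/
theorem noisy_damped_fixed_point_convergence
    {H : Type} [NormedAddCommGroup H] [InnerProductSpace ℝ H] [CompleteSpace H]
    (C μ₀ : ℝ) (hC : 0 < C) (hμ₀ : μ₀ < 0) (Φ : H → H)
    (hlip : ∀ u v : H, ‖Φ u - Φ v‖ ^ 2 ≤ C * ‖u - v‖ ^ 2)
    (hdiss : ∀ u v : H, ⟪Φ u - Φ v, u - v⟫ ≤ μ₀ * ‖u - v‖ ^ 2)
    (ustar : H) (hfix : Φ ustar = ustar) :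
    ∃ ρ ∈ Set.Ioo (0 : ℝ) 1, ∃ η ∈ Set.Ioo (0 : ℝ) 1, ∃ C' > 0,
      ∀ δ₁ δ₂ : ℝ, 0 ≤ δ₁ → 0 ≤ δ₂ →
      ∀ ΦN : H → H, (∀ u : H, ‖ΦN u - Φ u‖ ≤ δ₁) →
      ∀ (Ω : Type) (mΩ : MeasurableSpace Ω) (μ : Measure Ω),
        IsProbabilityMeasure μ →
      ∀ 𝒢 : Filtration ℕ mΩ, 𝒢 0 = ⊥ →
      ∀ Φhat : ℕ → Ω → H,
        (∀ k, MemLp (Φhat k) 2 μ) →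
        (∀ k, StronglyMeasurable[𝒢 (k + 1)] (Φhat k)) →
      ∀ (u0 : H) (U : ℕ → Ω → H),
        (U 0 = fun _ => u0) →
        (∀ k, U (k + 1) = fun ω => (1 - ρ) • Φhat k ω + ρ • U k ω) →
        (∀ k, μ[Φhat k | 𝒢 k] =ᵐ[μ] fun ω => ΦN (U k ω)) →
        (∀ k, ∀ᵐ ω ∂μ, (μ[fun ω' => ‖Φhat k ω' - ΦN (U k ω')‖ ^ 2 | 𝒢 k]) ω ≤ δ₂) →
      ∀ k : ℕ,
        ∫ ω, ‖U k ω - ustar‖ ^ 2 ∂μ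
          ≤ η ^ k * ‖u0 - ustar‖ ^ 2 + C' * (δ₁ ^ 2 + δ₂) := by
  obtain ⟨ρ, ⟨hρ0, hρ1⟩, hρC⟩ : ∃ ρ ∈ Set.Ioo (0 : ℝ) 1, (1 - ρ) * (C + 1) ≤ 1 :=
    ⟨(C + 1) / (C + 2), ⟨by positivity, (div_lt_one (by linarith)).2 (by linarith)⟩,
      by field_simp; linarith⟩
  have hlip' (u : H) : ‖Φ u - ustar‖ ^ 2 ≤ C * ‖u - ustar‖ ^ 2 := by
    simpa only [hfix] using hlip u ustar
  have hmono (u : H) : ⟪Φ u - ustar, u - ustar⟫ ≤ 0 := by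
    simpa only [hfix] using
      (hdiss u ustar).trans (mul_nonpos_of_nonpos_of_nonneg hμ₀.le (sq_nonneg _))
  refine ⟨ρ, ⟨hρ0, hρ1⟩, (1 + ρ) / 2, ⟨by linarith, by linarith⟩, 4 * (1 + ρ), by linarith, ?_⟩
  intro δ₁ δ₂ _ hδ₂ ΦN hΦN Ω _ μ _ 𝒢 _ Φhat hΦhat _ u0 U hU0 hU hunbiased hvar
  have hU_L2 (k : ℕ) : MemLp (U k) 2 μ := by
    induction k with
    | zero => exact hU0 ▸ memLp_const u0
    | succ k ih => exact hU k ▸ ((hΦhat k).const_smul (1 - ρ)).add (ih.const_smul ρ)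
  have hnoise_L2 (k : ℕ) : MemLp (fun ω => Φhat k ω - ΦN (U k ω)) 2 μ :=
    (hΦhat k).sub (((hΦhat k).condExp one_le_two).ae_eq (hunbiased k))
  have hstep (k : ℕ) : ∫ ω, ‖U (k + 1) ω - ustar‖ ^ 2 ∂μ
      ≤ (1 + ρ) / 2 * ∫ ω, ‖U k ω - ustar‖ ^ 2 ∂μ + 2 * (1 - ρ ^ 2) * (δ₁ ^ 2 + δ₂) :=
    integral_le_of_le_mul_add (fun _ => sq_nonneg _)
      ((hU_L2 k).sub (memLp_const ustar)).norm.integrable_sq (hnoise_L2 k).norm.integrable_sq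
      (by nlinarith)
      (fun ω => hU k ▸ norm_damped_step_sub_sq_le hρ0 hρ1 hρC (hlip' _) (hmono _) (hΦN _))
      (integral_le_of_ae_condExp_le (𝒢.le k) (hvar k))
  have hgeom := le_pow_mul_add_of_le_mul_add (e := fun k => ∫ ω, ‖U k ω - ustar‖ ^ 2 ∂μ)
    (c := 4 * (1 + ρ) * (δ₁ ^ 2 + δ₂)) hstep (by linarith) (by positivity) (by nlinarith)
  simpa [hU0] using hgeom
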